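/- Let C and C' be tidy and regular CRNs sharing no intermediate species, with formal bases F and F' respectively. Then the formal basis of C ∪ C' equals F ∪ F'. -/

import Mathlib

namespace CRNVerif

variable {σ : Type} [DecidableEq σ]

/-- A state is a multiset of species. -/
abbrev State (σ : Type) := Multiset σ
/-- A reaction is a pair (reactants, products) of multisets of species. -/
abbrev Reaction (σ : Type) := Multiset σ × Multiset σ
/-- A pathway is a finite sequence of reactions. -/
abbrev Pathway (σ : Type) := List (Reaction σ)

/-- Result of applying reaction `r` in state `S` (i.e. `S ⊕ r`). -/
def applyRxn (S : State σ) (r : Reaction σ) : State σ := S - r.1 + r.2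

/-- Minimal initial state of a pathway: the smallest state in which
its reactions can occur in succession. -/
def minInit : Pathway σ → State σ
  | [] => 0
  | r :: p => r.1 + (minInit p - r.2)

/-- State reached from `S` after performing all reactions of `p` in order. -/
def finalFrom (S : State σ) : Pathway σ → State σ
  | [] => S
  | r :: p => finalFrom (applyRxn S r) p

/-- The final state of a pathway (starting from its minimal initial state). -/
def finalState (p : Pathway σ) : State σ := finalFrom (minInit p) p

/-- The state `S_i` after the first `i` reactions, starting from the minimal initial state. -/
def stateAt (p : Pathway σ) (i : ℕ) : State σ := finalFrom (minInit p) (p.take i)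

/-- A state is formal if it contains only formal species (as given by `fm`). -/
def FormalState (fm : σ → Bool) (S : State σ) : Prop := ∀ x ∈ S, fm x = true

/-- `Formal(S)`: the multiset obtained by removing all intermediate species from `S`. -/
def formalPart (fm : σ → Bool) (S : State σ) : State σ := S.filter (fun x => fm x = true)

/-- A reaction is trivial if reactants equal products. -/
def TrivialRxn (r : Reaction σ) : Prop := r.1 = r.2

/-- A CRN is a (finite) set of nontrivial reactions. -/
def NontrivialRxns (C : Finset (Reaction σ)) : Prop := ∀ r ∈ C, ¬ TrivialRxn r

/-- A formal CRN contains only formal reactions. -/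
def IsFormalCRN (fm : σ → Bool) (C : Finset (Reaction σ)) : Prop :=
  ∀ r ∈ C, FormalState fm r.1 ∧ FormalState fm r.2

/-- `p` is a pathway of the CRN `C`. -/
def PathwayOf (C : Finset (Reaction σ)) (p : Pathway σ) : Prop := ∀ r ∈ p, r ∈ C

/-- `Interleave l₁ l₂ l`: `l` can be partitioned into the two (order-preserving,
not necessarily contiguous) subsequences `l₁` and `l₂`. -/
inductive Interleave {α : Type u} : List α → List α → List α → Prop
  | nil : Interleave [] [] []
  | left {a : α} {l₁ l₂ l : List α} : Interleave l₁ l₂ l → Interleave (a :: l₁) l₂ (a :: l)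
  | right {a : α} {l₁ l₂ l : List α} : Interleave l₁ l₂ l → Interleave l₁ (a :: l₂) (a :: l)

/-- `InterleaveMany qs p`: `p` is generated by interleaving the lists in `qs`. -/
inductive InterleaveMany {α : Type u} : List (List α) → List α → Prop
  | nil : InterleaveMany [] []
  | cons {q r p : List α} {qs : List (List α)} :
      Interleave q r p → InterleaveMany qs r → InterleaveMany (q :: qs) p

/-- A pathway is semiformal if its minimal initial state is formal. -/
def Semiformal (fm : σ → Bool) (p : Pathway σ) : Prop := FormalState fm (minInit p)

/-- A formal pathway: a (nonempty) pathway whose minimal initial state and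
final state are both formal. -/
def FormalPathway (fm : σ → Bool) (p : Pathway σ) : Prop :=
  p ≠ [] ∧ FormalState fm (minInit p) ∧ FormalState fm (finalState p)

/-- A formal pathway is decomposable if it can be partitioned into two nonempty
subsequences that are each formal pathways. -/
def FDecomposable (fm : σ → Bool) (p : Pathway σ) : Prop :=
  ∃ q₁ q₂, q₁ ≠ [] ∧ q₂ ≠ [] ∧ Interleave q₁ q₂ p ∧
    FormalPathway fm q₁ ∧ FormalPathway fm q₂

/-- A prime formal pathway is a formal pathway that is not decomposable. -/
def PrimePathway (fm : σ → Bool) (p : Pathway σ) : Prop :=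
  FormalPathway fm p ∧ ¬ FDecomposable fm p

/-- The formal basis: the set of (initial state, final state) pairs of prime
formal pathways of `C`. -/
def formalBasis (fm : σ → Bool) (C : Finset (Reaction σ)) : Set (Reaction σ) :=
  { r | ∃ p, PathwayOf C p ∧ PrimePathway fm p ∧ r = (minInit p, finalState p) }

/-- Two sets of reactions are equal up to addition/removal of trivial reactions. -/
def EqUpToTrivial (A B : Set (Reaction σ)) : Prop :=
  {r ∈ A | ¬ TrivialRxn r} = {r ∈ B | ¬ TrivialRxn r}

/-- The reaction at (0-based) index `j` of `p` is a turning point: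
before it only formal species of the initial state appear, from it on only formal
species of the final state appear, and at the moment the turning point fires,
no formal species are left over. -/
def TurningAt (fm : σ → Bool) (p : Pathway σ) (j : ℕ) : Prop :=
  ∃ h : j < p.length,
    (∀ i ≤ j, formalPart fm (stateAt p i) ≤ minInit p) ∧
    (∀ i, j < i → i ≤ p.length → formalPart fm (stateAt p i) ≤ finalState p) ∧
    formalPart fm (stateAt p j - (p.get ⟨j, h⟩).1) = 0

/-- A regular formal pathway: one that implements a formal reaction,
i.e. has a turning point. -/
def RegularPathway (fm : σ → Bool) (p : Pathway σ) : Prop :=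
  FormalPathway fm p ∧ ∃ j, TurningAt fm p j

/-- A CRN is regular if every prime formal pathway is regular. -/
def RegularCRN (fm : σ → Bool) (C : Finset (Reaction σ)) : Prop :=
  ∀ p, PathwayOf C p → PrimePathway fm p → RegularPathway fm p

/-- `q` is a strong closing pathway for `p` (within CRN `C`): it can occur in the
final state of `p`, consumes no formal species, and leads back to a formal state. -/
def ClosingPathway (fm : σ → Bool) (C : Finset (Reaction σ)) (p q : Pathway σ) : Prop :=
  PathwayOf C q ∧ minInit q ≤ finalState p ∧ (∀ r ∈ q, formalPart fm r.1 = 0) ∧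
  FormalState fm (finalFrom (finalState p) q)

/-- A CRN is strongly tidy if every semiformal pathway has a strong closing pathway. -/
def StronglyTidy (fm : σ → Bool) (C : Finset (Reaction σ)) : Prop :=
  ∀ p, PathwayOf C p → Semiformal fm p → ∃ q, ClosingPathway fm C p q

/-- A semiformal pathway is decomposable if it can be partitioned into two
nonempty subsequences that are each semiformal. -/
def SDecomposable (fm : σ → Bool) (p : Pathway σ) : Prop :=
  ∃ q₁ q₂, q₁ ≠ [] ∧ q₂ ≠ [] ∧ Interleave q₁ q₂ p ∧ Semiformal fm q₁ ∧ Semiformal fm q₂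

/-- The width of a pathway: the maximum size of the states it passes through. -/
def width (p : Pathway σ) : ℕ :=
  ((List.range (p.length + 1)).map (fun i => Multiset.card (stateAt p i))).foldr max 0

/-- The branching factor of a CRN. -/
def branching (C : Finset (Reaction σ)) : ℕ :=
  C.sup (fun r => max (Multiset.card r.1) (Multiset.card r.2))

/-- Formal state `T` is reachable from `S` via reactions of `C`. -/
def Reachable (C : Finset (Reaction σ)) (S T : State σ) : Prop :=
  ∃ p, PathwayOf C p ∧ minInit p ≤ S ∧ finalFrom S p = T

/-- `C` and `C'` share no intermediate species: any species occurring in both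
CRNs is formal. -/
def NoSharedIntermediates (fm : σ → Bool) (C C' : Finset (Reaction σ)) : Prop :=
  ∀ r ∈ C, ∀ r' ∈ C', ∀ x : σ, x ∈ r.1 + r.2 → x ∈ r'.1 + r'.2 → fm x = true

/-- The formal closure of a pathway: the minimal state containing the formal part
of every state along the pathway. -/
def formalClosure (fm : σ → Bool) (p : Pathway σ) : State σ :=
  ((List.range (p.length + 1)).map (fun i => formalPart fm (stateAt p i))).foldr (· ∪ ·) 0

/-- The decomposed final states of a semiformal pathway: all pairs of final
states arising from decompositions into two (nonempty) semiformal pathways. -/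
def DFS (fm : σ → Bool) (p : Pathway σ) : Set (State σ × State σ) :=
  { T | ∃ q₁ q₂, q₁ ≠ [] ∧ q₂ ≠ [] ∧ Interleave q₁ q₂ p ∧
        Semiformal fm q₁ ∧ Semiformal fm q₂ ∧ T = (finalState q₁, finalState q₂) }

/-- The minimal state containing the formal parts of all states strictly after index `j`. -/
def rfsAt (fm : σ → Bool) (p : Pathway σ) (j : ℕ) : State σ :=
  (((List.range (p.length + 1)).filter (fun i => j < i)).map
      (fun i => formalPart fm (stateAt p i))).foldr (· ∪ ·) 0

/-- The regular final states of a pathway: the minimal states `T` witnessed by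
potential turning point reactions. -/
def RFS (fm : σ → Bool) (p : Pathway σ) : Set (State σ) :=
  { T | ∃ j, ∃ h : j < p.length,
      (∀ i ≤ j, formalPart fm (stateAt p i) ≤ minInit p) ∧
      formalPart fm (stateAt p j - (p.get ⟨j, h⟩).1) = 0 ∧
      T = rfsAt fm p j }

/-- The signature of a semiformal pathway: (initial state, final state, width,
formal closure, DFS, RFS). -/
def signature (fm : σ → Bool) (p : Pathway σ) :
    State σ × State σ × ℕ × State σ × Set (State σ × State σ) × Set (State σ) :=
  (minInit p, finalState p, width p, formalClosure fm p, DFS fm p, RFS fm p)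

/-- An annotated prime pathway: exactly its chosen turning point is annotated,
with the corresponding formal basis reaction. -/
def GoodAnnotation (fm : σ → Bool) (ap : List (Reaction σ × Option (Reaction σ))) : Prop :=
  PrimePathway fm (ap.map Prod.fst) ∧
  ∃ j, TurningAt fm (ap.map Prod.fst) j ∧
    ap.map Prod.snd = (List.range ap.length).map
      (fun i => if i = j then
          some (minInit (ap.map Prod.fst), finalState (ap.map Prod.fst)) else none)

/-- `p` can be interpreted as `q`: `q` can occur in the initial state of `p`, has
the same net effect, and there is a decomposition of `p` into prime formal pathways
such that replacing a chosen turning point of each by the corresponding formal basis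
element and removing all other reactions yields `q`. -/
def Interpreted (fm : σ → Bool) (p q : Pathway σ) : Prop :=
  minInit q ≤ minInit p ∧
  finalFrom (minInit p) q = finalState p ∧
  ∃ ap : List (Reaction σ × Option (Reaction σ)),
    ap.map Prod.fst = p ∧ (ap.map Prod.snd).reduceOption = q ∧
    ∃ aps, InterleaveMany aps ap ∧ ∀ a ∈ aps, GoodAnnotation fm a


/-!
A prime formal pathway of `C ∪ C'` using reactions of both CRNs splits into its `C`-reactions
and its `C'`-reactions. An intermediate species occurring in one half does not occur in the
other, so along that half it is counted exactly as along the whole pathway; hence both halves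
are formal pathways, contradicting primality.
-/

theorem Interleave.symm {α : Type u} {l₁ l₂ l : List α} (h : Interleave l₁ l₂ l) :
    Interleave l₂ l₁ l := by
  induction h with
  | nil => exact .nil
  | left _ ih => exact .right ih
  | right _ ih => exact .left ih

theorem interleave_filter {α : Type u} (P : α → Bool) (l : List α) :
    Interleave (l.filter P) (l.filter fun a => !P a) l := by
  induction l with
  | nil => exact .nil
  | cons a l ih =>
    cases h : P a
    · simpa [List.filter, h] using Interleave.right ih
    · simpa [List.filter, h] using Interleave.left ih

section Interleave

variable {x : σ} {q₁ q₂ p : Pathway σ}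

theorem count_minInit_of_interleave (h : Interleave q₁ q₂ p) (hx : ∀ r ∈ q₂, x ∉ r.1 + r.2) :
    (minInit q₁).count x = (minInit p).count x := by
  induction h with
  | nil => rfl
  | left _ ih => simp [minInit, ih hx]
  | right _ ih =>
    have hr := hx _ List.mem_cons_self
    rw [Multiset.mem_add, not_or] at hr
    simp [minInit, Multiset.count_eq_zero_of_notMem hr.1, Multiset.count_eq_zero_of_notMem hr.2,
      ← ih fun r hr => hx r (List.mem_cons_of_mem _ hr)]

theorem count_finalFrom_of_interleave (h : Interleave q₁ q₂ p) (hx : ∀ r ∈ q₂, x ∉ r.1 + r.2)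
    {S T : State σ} (hST : S.count x = T.count x) :
    (finalFrom S q₁).count x = (finalFrom T p).count x := by
  induction h generalizing S T with
  | nil => exact hST
  | left _ ih => exact ih hx (by simp [applyRxn, hST])
  | right _ ih =>
    have hr := hx _ List.mem_cons_self
    rw [Multiset.mem_add, not_or] at hr
    exact ih (fun r hr => hx r (List.mem_cons_of_mem _ hr)) (by
      simp [applyRxn, Multiset.count_eq_zero_of_notMem hr.1,
        Multiset.count_eq_zero_of_notMem hr.2, hST])

theorem mem_minInit_iff_of_interleave (h : Interleave q₁ q₂ p)
    (hx : ∀ r ∈ q₂, x ∉ r.1 + r.2) : x ∈ minInit q₁ ↔ x ∈ minInit p := by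
  rw [← Multiset.count_pos, ← Multiset.count_pos, count_minInit_of_interleave h hx]

theorem mem_finalState_iff_of_interleave (h : Interleave q₁ q₂ p)
    (hx : ∀ r ∈ q₂, x ∉ r.1 + r.2) : x ∈ finalState q₁ ↔ x ∈ finalState p := by
  rw [← Multiset.count_pos, ← Multiset.count_pos, finalState, finalState,
    count_finalFrom_of_interleave h hx (count_minInit_of_interleave h hx)]

end Interleave

theorem exists_mem_of_mem_minInit {x : σ} {p : Pathway σ} (hx : x ∈ minInit p) :
    ∃ r ∈ p, x ∈ r.1 + r.2 := by
  induction p with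
  | nil => simp [minInit] at hx
  | cons r p ih =>
    rcases Multiset.mem_add.1 hx with h | h
    · exact ⟨r, List.mem_cons_self, Multiset.mem_add.2 (Or.inl h)⟩
    · obtain ⟨r', hr', hxr'⟩ := ih (Multiset.mem_of_le tsub_le_self h)
      exact ⟨r', List.mem_cons_of_mem _ hr', hxr'⟩

theorem exists_mem_of_mem_finalFrom {x : σ} {S : State σ} {p : Pathway σ}
    (hx : x ∈ finalFrom S p) : x ∈ S ∨ ∃ r ∈ p, x ∈ r.1 + r.2 := by
  induction p generalizing S with
  | nil => exact Or.inl hx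
  | cons r p ih =>
    rcases ih hx with h | ⟨r', hr', hxr'⟩
    · rcases Multiset.mem_add.1 h with h | h
      · exact Or.inl (Multiset.mem_of_le tsub_le_self h)
      · exact Or.inr ⟨r, List.mem_cons_self, Multiset.mem_add.2 (Or.inr h)⟩
    · exact Or.inr ⟨r', List.mem_cons_of_mem _ hr', hxr'⟩

theorem exists_mem_of_mem_finalState {x : σ} {p : Pathway σ} (hx : x ∈ finalState p) :
    ∃ r ∈ p, x ∈ r.1 + r.2 :=
  (exists_mem_of_mem_finalFrom hx).elim exists_mem_of_mem_minInit id

theorem FormalPathway.of_interleave {fm : σ → Bool} {C C' : Finset (Reaction σ)}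
    (hdisj : NoSharedIntermediates fm C C') {q₁ q₂ p : Pathway σ} (h : Interleave q₁ q₂ p)
    (hq₁ : PathwayOf C q₁) (hq₂ : PathwayOf C' q₂) (hne : q₁ ≠ []) (hp : FormalPathway fm p) :
    FormalPathway fm q₁ := by
  have absent : ∀ x, fm x ≠ true → (∃ r ∈ q₁, x ∈ r.1 + r.2) → ∀ r' ∈ q₂, x ∉ r'.1 + r'.2 :=
    fun x hfm ⟨r, hr, hxr⟩ r' hr' hxr' => hfm (hdisj r (hq₁ r hr) r' (hq₂ r' hr') x hxr hxr')
  refine ⟨hne, fun x hx => ?_, fun x hx => ?_⟩ <;> by_contra hfm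
  · have hx' := absent x hfm (exists_mem_of_mem_minInit hx)
    exact hfm (hp.2.1 x ((mem_minInit_iff_of_interleave h hx').1 hx))
  · have hx' := absent x hfm (exists_mem_of_mem_finalState hx)
    exact hfm (hp.2.2 x ((mem_finalState_iff_of_interleave h hx').1 hx))

theorem PrimePathway.pathwayOf_or_of_union {fm : σ → Bool} {C C' : Finset (Reaction σ)}
    (hdisj : NoSharedIntermediates fm C C') {p : Pathway σ} (hp : PathwayOf (C ∪ C') p)
    (hprime : PrimePathway fm p) : PathwayOf C p ∨ PathwayOf C' p := by
  by_contra! hboth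
  obtain ⟨⟨r, hrp, hrC⟩, ⟨r', hr'p, hr'C'⟩⟩ : (∃ r ∈ p, r ∉ C) ∧ ∃ r ∈ p, r ∉ C' := by
    simpa [PathwayOf] using hboth
  set q₁ := p.filter fun r => decide (r ∈ C)
  set q₂ := p.filter fun r => !decide (r ∈ C)
  have hq₁ : PathwayOf C q₁ := fun r hr => by simpa [q₁] using (List.mem_filter.1 hr).2
  have hq₂ : PathwayOf C' q₂ := fun r hr => by
    obtain ⟨hrp, hrC⟩ := List.mem_filter.1 hr
    exact (Finset.mem_union.1 (hp r hrp)).resolve_left (by simpa using hrC)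
  have hne₁ : q₁ ≠ [] := List.ne_nil_of_mem (a := r') <| List.mem_filter.2
    ⟨hr'p, by simpa using (Finset.mem_union.1 (hp r' hr'p)).resolve_right hr'C'⟩
  have hne₂ : q₂ ≠ [] := List.ne_nil_of_mem (a := r) <| List.mem_filter.2 ⟨hrp, by simpa using hrC⟩
  have hI : Interleave q₁ q₂ p := interleave_filter _ p
  have hdisj' : NoSharedIntermediates fm C' C :=
    fun r' hr' r hr x hx' hx => hdisj r hr r' hr' x hx hx'
  exact hprime.2 ⟨q₁, q₂, hne₁, hne₂, hI, .of_interleave hdisj hI hq₁ hq₂ hne₁ hprime.1,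
    .of_interleave hdisj' hI.symm hq₂ hq₁ hne₂ hprime.1⟩

theorem formalBasis_mono (fm : σ → Bool) {C D : Finset (Reaction σ)} (h : C ⊆ D) :
    formalBasis fm C ⊆ formalBasis fm D :=
  fun _ ⟨p, hp, hprime, hr⟩ => ⟨p, fun r hr => h (hp r hr), hprime, hr⟩

theorem formalBasis_union_general {σ : Type} [DecidableEq σ] (fm : σ → Bool)
    (C C' : Finset (Reaction σ))
    (hdisj : NoSharedIntermediates fm C C') :
    formalBasis fm (C ∪ C') = formalBasis fm C ∪ formalBasis fm C' := by
  refine subset_antisymm ?_ (Set.union_subset (formalBasis_mono fm Finset.subset_union_left)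
    (formalBasis_mono fm Finset.subset_union_right))
  rintro _ ⟨p, hp, hprime, rfl⟩
  rcases hprime.pathwayOf_or_of_union hdisj hp with h | h
  · exact Or.inl ⟨p, h, hprime, rfl⟩
  · exact Or.inr ⟨p, h, hprime, rfl⟩

/-- For tidy and regular CRNs sharing no intermediate species, the formal basis of
the union is the union of the formal bases. -/
theorem formalBasis_union {σ : Type} [DecidableEq σ] (fm : σ → Bool)
    (C C' : Finset (Reaction σ))
    (hC : NontrivialRxns C) (hC' : NontrivialRxns C')
    (hdisj : NoSharedIntermediates fm C C')
    (ht : StronglyTidy fm C) (hr : RegularCRN fm C)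
    (ht' : StronglyTidy fm C') (hr' : RegularCRN fm C') :
    formalBasis fm (C ∪ C') = formalBasis fm C ∪ formalBasis fm C' :=
  formalBasis_union_general fm C C' hdisj

end CRNVerif
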